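/- arXiv:2401.02461 — 2 statements merged into one kernel-verified Lean document; each statement's English description precedes it below -/
import Mathlib

section
/- Let α be a real number with 0 < α ≤ 1. For all real numbers τ, t₁, t₂ with 0 ≤ τ < t₁ ≤ t₂, one has 0 ≤ (t₁ − τ)^(α−1) − (t₂ − τ)^(α−1) ≤ (t₂ − t₁)^(1−α) · (t₁ − τ)^(α−1) · (t₂ − τ)^(α−1). -/
open Real

lemma rpow_add_le_add_rpow_real (x y p : ℝ) (hx : 0 ≤ x) (hy : 0 ≤ y)
    (hp : 0 ≤ p) (hp1 : p ≤ 1) : (x + y) ^ p ≤ x ^ p + y ^ p := by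
  lift x to NNReal using hx
  lift y to NNReal using hy
  have := NNReal.rpow_add_le_add_rpow x y hp hp1
  exact_mod_cast this

theorem kernel_diff_estimate (α : ℝ) (hα0 : 0 < α) (hα1 : α ≤ 1)
    (τ t₁ t₂ : ℝ) (hτ : 0 ≤ τ) (hτ1 : τ < t₁) (h12 : t₁ ≤ t₂) :
    0 ≤ (t₁ - τ) ^ (α - 1) - (t₂ - τ) ^ (α - 1) ∧
      (t₁ - τ) ^ (α - 1) - (t₂ - τ) ^ (α - 1) ≤
        (t₂ - t₁) ^ (1 - α) * (t₁ - τ) ^ (α - 1) * (t₂ - τ) ^ (α - 1) := by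
  set a := t₁ - τ with ha'
  set b := t₂ - τ with hb'
  have ha : 0 < a := by simp [ha']; linarith
  have hb : 0 < b := lt_of_lt_of_le ha (by simp [ha', hb']; linarith)
  have hab : a ≤ b := by simp [ha', hb']; linarith
  set γ := 1 - α with hγ'
  have hγ0 : 0 ≤ γ := by linarith
  have hγ1 : γ ≤ 1 := by linarith
  have hexp : α - 1 = -γ := by ring
  have hA : (0:ℝ) < a ^ γ := rpow_pos_of_pos ha γ
  have hB : (0:ℝ) < b ^ γ := rpow_pos_of_pos hb γ
  have key : b ^ γ - a ^ γ ≤ (b - a) ^ γ := by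
    have h := rpow_add_le_add_rpow_real (b - a) a γ (by linarith) ha.le hγ0 hγ1
    rw [sub_add_cancel] at h
    linarith
  have hmono : b ^ (α - 1) ≤ a ^ (α - 1) := by
    rw [hexp, rpow_neg ha.le, rpow_neg hb.le]
    exact inv_anti₀ hA (rpow_le_rpow ha.le hab hγ0)
  refine ⟨by linarith, ?_⟩
  have heq : t₂ - t₁ = b - a := by rw [hb', ha']; ring
  rw [hexp, heq, rpow_neg ha.le, rpow_neg hb.le]
  have hdiff : (a ^ γ)⁻¹ - (b ^ γ)⁻¹ = (b ^ γ - a ^ γ) / (a ^ γ * b ^ γ) := by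
    field_simp
  rw [hdiff]
  calc (b ^ γ - a ^ γ) / (a ^ γ * b ^ γ) ≤ (b - a) ^ γ / (a ^ γ * b ^ γ) := by
        gcongr
      _ = (b - a) ^ γ * (a ^ γ)⁻¹ * (b ^ γ)⁻¹ := by
        rw [div_eq_mul_inv, mul_inv]; ring
end

section
/- Let α be a real number with 0 < α ≤ 1, let T > 0, let C ≥ 0, and let g : ℝ → ℝ be a measurable function satisfying 0 ≤ g(s) ≤ C · s^(2α) for almost every s ∈ (0, T). Then for every t with 0 < t ≤ T, ∫₀^t (t − s)^(α−1) · g(s) ds ≤ C · T^(3α) · Γ(α) · Γ(2α+1) / Γ(3α+1). -/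
open Real MeasureTheory

lemma beta_real (a b : ℝ) (ha : 0 < a) (hb : 0 < b) :
    ∫ x in (0:ℝ)..1, x ^ (a - 1) * (1 - x) ^ (b - 1) =
      Real.Gamma a * Real.Gamma b / Real.Gamma (a + b) := by
  have key : Complex.Gamma a * Complex.Gamma b =
      Complex.Gamma (a + b) * Complex.betaIntegral a b := by
    have := Complex.Gamma_mul_Gamma_eq_betaIntegral (s := (a:ℂ)) (t := (b:ℂ))
      (by simpa using ha) (by simpa using hb)
    simpa using this
  have hre : (((∫ x in (0:ℝ)..1, x ^ (a - 1) * (1 - x) ^ (b - 1)) : ℝ) : ℂ) =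
      Complex.betaIntegral a b := by
    rw [Complex.betaIntegral, ← intervalIntegral.integral_ofReal]
    apply intervalIntegral.integral_congr
    intro x hx
    simp only [Set.uIcc_of_le (by norm_num : (0:ℝ) ≤ 1), Set.mem_Icc] at hx
    show ((x ^ (a - 1) * (1 - x) ^ (b - 1) : ℝ) : ℂ) = _
    rw [Complex.ofReal_mul, Complex.ofReal_cpow hx.1,
      Complex.ofReal_cpow (by linarith [hx.2] : (0:ℝ) ≤ 1 - x)]
    push_cast
    ring
  have hΓ : Real.Gamma (a + b) ≠ 0 := (Real.Gamma_pos_of_pos (by linarith)).ne'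
  have h2 : Complex.betaIntegral a b =
      ((Real.Gamma a * Real.Gamma b / Real.Gamma (a + b) : ℝ) : ℂ) := by
    have hΓc : (Complex.Gamma ((a:ℂ) + b)) ≠ 0 := by
      rw [show ((a:ℂ) + b) = ((a + b : ℝ) : ℂ) by push_cast; ring, Complex.Gamma_ofReal]
      exact_mod_cast hΓ
    rw [Complex.ofReal_div, Complex.ofReal_mul,
      eq_div_iff (by exact_mod_cast hΓ : ((Real.Gamma (a+b) : ℂ)) ≠ 0)]
    rw [← Complex.Gamma_ofReal, ← Complex.Gamma_ofReal, ← Complex.Gamma_ofReal]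
    push_cast
    rw [mul_comm ((Complex.betaIntegral a b)), ← key]
  rw [h2] at hre
  exact_mod_cast hre

lemma rpow_intint (α t : ℝ) (hα : 0 < α) (ht : 0 < t) :
    IntervalIntegrable (fun s => (t - s) ^ (α - 1)) volume 0 t := by
  have h := (intervalIntegral.intervalIntegrable_rpow' (a := 0) (b := t)
    (by linarith : (-1:ℝ) < α - 1)).comp_sub_left t
  simpa using h.symm

lemma f_intint (α t : ℝ) (hα : 0 < α) (ht : 0 < t) :
    IntervalIntegrable (fun s => (t - s) ^ (α - 1) * s ^ (2 * α)) volume 0 t := by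
  apply IntervalIntegrable.mono_fun (((rpow_intint α t hα ht).const_mul (t ^ (2 * α))))
  · exact (by fun_prop : Measurable fun s => (t - s) ^ (α - 1) * s ^ (2 * α)).aestronglyMeasurable
  · rw [Set.uIoc_of_le ht.le]
    filter_upwards [ae_restrict_mem measurableSet_Ioc] with s hs
    have h1 : (0:ℝ) ≤ t - s := by linarith [hs.2]
    rw [Real.norm_eq_abs, Real.norm_eq_abs, abs_mul, abs_mul,
      abs_of_nonneg (Real.rpow_nonneg h1 _), abs_of_nonneg (Real.rpow_nonneg hs.1.le _),
      abs_of_nonneg (Real.rpow_nonneg ht.le _), mul_comm ((t - s) ^ (α - 1))]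
    exact mul_le_mul_of_nonneg_right
      (Real.rpow_le_rpow hs.1.le hs.2 (by positivity)) (Real.rpow_nonneg h1 _)

lemma subst_lemma (α t : ℝ) (hα : 0 < α) (ht : 0 < t) :
    ∫ s in (0:ℝ)..t, (t - s) ^ (α - 1) * s ^ (2 * α) =
      t ^ (3 * α) * ∫ x in (0:ℝ)..1, x ^ (2 * α + 1 - 1) * (1 - x) ^ (α - 1) := by
  have h := intervalIntegral.smul_integral_comp_mul_left
    (f := fun s => (t - s) ^ (α - 1) * s ^ (2 * α)) (a := 0) (b := 1) t
  simp only [mul_zero, mul_one, smul_eq_mul] at h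
  rw [← h]
  have : ∫ x in (0:ℝ)..1, (t - t * x) ^ (α - 1) * (t * x) ^ (2 * α) =
      (t ^ (α - 1) * t ^ (2 * α)) * ∫ x in (0:ℝ)..1, x ^ (2 * α + 1 - 1) * (1 - x) ^ (α - 1) := by
    rw [← intervalIntegral.integral_const_mul]
    apply intervalIntegral.integral_congr
    intro x hx
    simp only [Set.uIcc_of_le (by norm_num : (0:ℝ) ≤ 1), Set.mem_Icc] at hx
    have h1 : t - t * x = t * (1 - x) := by ring
    dsimp only
    rw [h1, Real.mul_rpow ht.le (by linarith [hx.2]), Real.mul_rpow ht.le hx.1]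
    ring_nf
  rw [this, ← mul_assoc]
  congr 1
  have h2 : t * (t ^ (α - 1) * t ^ (2 * α)) = t ^ (1:ℝ) * (t ^ (α - 1) * t ^ (2 * α)) := by
    rw [Real.rpow_one]
  rw [h2, ← Real.rpow_add ht, ← Real.rpow_add ht]
  congr 1
  ring

theorem convolution_estimate_four (α T C : ℝ) (hα : 0 < α) (hα1 : α ≤ 1)
    (hT : 0 < T) (hC : 0 ≤ C) (g : ℝ → ℝ) (hg : Measurable g)
    (hbound : ∀ᵐ s ∂(volume.restrict (Set.Ioo 0 T)), 0 ≤ g s ∧ g s ≤ C * s ^ (2 * α)) :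
    ∀ t : ℝ, 0 < t → t ≤ T →
      ∫ s in (0:ℝ)..t, (t - s) ^ (α - 1) * g s ≤
        C * T ^ (3 * α) * Real.Gamma α * Real.Gamma (2 * α + 1) / Real.Gamma (3 * α + 1) := by
  intro t ht htT
  have hfI := f_intint α t hα ht
  have hbound' : ∀ᵐ s ∂volume, s ∈ Set.Ioo (0:ℝ) T → (0 ≤ g s ∧ g s ≤ C * s ^ (2 * α)) :=
    (ae_restrict_iff' measurableSet_Ioo).mp hbound
  -- a.e. bound on Icc 0 t
  have hae : ∀ᵐ s ∂(volume.restrict (Set.Icc (0:ℝ) t)),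
      (t - s) ^ (α - 1) * g s ≤ C * ((t - s) ^ (α - 1) * s ^ (2 * α)) ∧
      0 ≤ (t - s) ^ (α - 1) * g s := by
    have hset : ∀ᵐ s ∂volume, s ∈ Set.Icc (0:ℝ) t → s ∈ Set.Ioo (0:ℝ) T ∨ s = 0 ∨ s = t := by
      filter_upwards with s hs
      rcases eq_or_lt_of_le hs.1 with h0 | h0
      · exact Or.inr (Or.inl h0.symm)
      rcases eq_or_lt_of_le hs.2 with h1 | h1
      · exact Or.inr (Or.inr h1)
      exact Or.inl ⟨h0, lt_of_lt_of_le h1 htT⟩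
    have hne : ∀ᵐ s : ℝ ∂volume, s ≠ 0 ∧ s ≠ t := by
      refine ae_iff.mpr (measure_mono_null ?_
        (Set.Finite.measure_zero (Set.toFinite ({0, t} : Set ℝ)) volume))
      intro s hs
      simp only [Set.mem_setOf_eq, not_and_or, not_not] at hs
      simpa using hs
    rw [ae_restrict_iff' measurableSet_Icc]
    filter_upwards [hbound', hset, hne] with s hb hset hne hs
    have hsIoo : s ∈ Set.Ioo (0:ℝ) T := by
      rcases hset hs with h | h | h
      · exact h
      · exact absurd h hne.1
      · exact absurd h hne.2
    obtain ⟨hg0, hgle⟩ := hb hsIoo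
    have hrp : 0 ≤ (t - s) ^ (α - 1) := Real.rpow_nonneg (by linarith [hs.2]) _
    constructor
    · calc (t - s) ^ (α - 1) * g s ≤ (t - s) ^ (α - 1) * (C * s ^ (2 * α)) :=
            mul_le_mul_of_nonneg_left hgle hrp
        _ = C * ((t - s) ^ (α - 1) * s ^ (2 * α)) := by ring
    · exact mul_nonneg hrp hg0
  -- integrability of LHS integrand
  have hgI : IntervalIntegrable (fun s => (t - s) ^ (α - 1) * g s) volume 0 t := by
    apply IntervalIntegrable.mono_fun (hfI.const_mul C)
    · exact ((by fun_prop : Measurable fun s => (t - s) ^ (α - 1)).mul hg).aestronglyMeasurable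
    · rw [Set.uIoc_of_le ht.le]
      have := (ae_restrict_iff' measurableSet_Icc).mp hae
      rw [Filter.EventuallyLE, ae_restrict_iff' measurableSet_Ioc]
      filter_upwards [this] with s hs hsIoc
      have h := hs ⟨hsIoc.1.le, hsIoc.2⟩
      simp only [Real.norm_eq_abs, abs_of_nonneg h.2]
      calc (t - s) ^ (α - 1) * g s ≤ C * ((t - s) ^ (α - 1) * s ^ (2 * α)) := h.1
        _ ≤ |C * ((t - s) ^ (α - 1) * s ^ (2 * α))| := le_abs_self _
  -- compare integrals
  have hle1 : ∫ s in (0:ℝ)..t, (t - s) ^ (α - 1) * g s ≤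
      ∫ s in (0:ℝ)..t, C * ((t - s) ^ (α - 1) * s ^ (2 * α)) := by
    apply intervalIntegral.integral_mono_ae_restrict ht.le hgI (hfI.const_mul C)
    filter_upwards [hae] with s hs using hs.1
  rw [intervalIntegral.integral_const_mul, subst_lemma α t hα ht,
    beta_real (2 * α + 1) α (by linarith) hα] at hle1
  have h3 : 2 * α + 1 + α = 3 * α + 1 := by ring
  rw [h3] at hle1
  have hB : 0 ≤ Real.Gamma (2 * α + 1) * Real.Gamma α / Real.Gamma (3 * α + 1) := by
    have := Real.Gamma_pos_of_pos hα
    have := Real.Gamma_pos_of_pos (show (0:ℝ) < 2 * α + 1 by linarith)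
    have := Real.Gamma_pos_of_pos (show (0:ℝ) < 3 * α + 1 by linarith)
    positivity
  have htT3 : t ^ (3 * α) ≤ T ^ (3 * α) := Real.rpow_le_rpow ht.le htT (by positivity)
  calc ∫ s in (0:ℝ)..t, (t - s) ^ (α - 1) * g s
      ≤ C * (t ^ (3 * α) * (Real.Gamma (2 * α + 1) * Real.Gamma α / Real.Gamma (3 * α + 1))) := hle1
    _ ≤ C * (T ^ (3 * α) * (Real.Gamma (2 * α + 1) * Real.Gamma α / Real.Gamma (3 * α + 1))) := by
        apply mul_le_mul_of_nonneg_left (mul_le_mul_of_nonneg_right htT3 hB) hC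
    _ = C * T ^ (3 * α) * Real.Gamma α * Real.Gamma (2 * α + 1) / Real.Gamma (3 * α + 1) := by
        ring
end
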